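/- If p(z) is a polynomial of degree n with no zeros in the open unit disk D(0,1), then for every R ≥ 1, max_{|z|=R} |p(z)| ≤ ((R^n + 1)/2) · max_{|z|=1} |p(z)|. -/

import Mathlib

/-!
Let `q(z) = zⁿ · conj (p (1 / conj z))` be the conjugate reciprocal of `p`, so that
`‖q‖ = ‖p‖` on the unit circle, and let `M = polyMax p 1`. As `p` has no zeros in the open
disk, comparing the factors of `p` and `q` root by root gives `‖p z‖ ≤ ‖q z‖` for `‖z‖ ≥ 1`,
so it suffices to show `‖p (R u)‖ + ‖q (R u)‖ ≤ (Rⁿ + 1) M` for `‖u‖ = 1`.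

On the circle `‖q' u‖ = ‖n p u - u p' u‖`, so `‖p' u‖ + ‖q' u‖` is the largest value of the polar
derivative `‖n p u + (α - u) p' u‖` over `‖α‖ = 1`. That is at most `n M` by Laguerre's theorem:
for `‖c‖ > M` all zeros of `p - c Xⁿ` lie in the open disk, so its polar derivative has no zero on
the circle. Hence for `‖β‖ = 1` the polynomial `T = β q + p` has `‖T‖ ≤ 2M` and `‖T'‖ ≤ n M` on
the circle, so `‖T' w‖ ≤ n M ‖w‖ⁿ⁻¹` outside it, and integrating along the ray gives
`‖T (R u)‖ ≤ (Rⁿ + 1) M`. Choosing `β` that aligns `β q (R u)` with `p (R u)` concludes.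
-/

noncomputable def polyMax (p : Polynomial ℂ) (r : ℝ) : ℝ :=
  ⨆ z : Metric.sphere (0 : ℂ) r, ‖p.eval (z : ℂ)‖

open Polynomial Metric Set ComplexConjugate

theorem Complex.two_mul_re_div_sub {z r : ℂ} (h : z ≠ r) :
    2 * (z / (z - r)).re = 1 + (‖z‖ ^ 2 - ‖r‖ ^ 2) / ‖z - r‖ ^ 2 := by
  have hzr : Complex.normSq (z - r) ≠ 0 := Complex.normSq_eq_zero.not.mpr (sub_ne_zero.mpr h)
  rw [Complex.div_re, Complex.sq_norm, Complex.sq_norm, Complex.sq_norm]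
  field_simp
  simp only [Complex.normSq_apply, Complex.sub_re, Complex.sub_im]
  ring

theorem Complex.re_div_sub_add_div_sub_pos {z α r : ℂ} (hz : ‖z‖ = 1) (hα : ‖α‖ = 1)
    (hαz : α ≠ z) (hr : ‖r‖ < 1) : 0 < (z / (α - z) + z / (z - r)).re := by
  have hzr : z ≠ r := fun h => hr.ne (h ▸ hz)
  have hα' := Complex.two_mul_re_div_sub hαz.symm
  rw [hz, hα, sub_self, zero_div, add_zero] at hα'
  have hr' := Complex.two_mul_re_div_sub hzr
  have hpos : 0 < (‖z‖ ^ 2 - ‖r‖ ^ 2) / ‖z - r‖ ^ 2 := by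
    rw [hz]
    exact div_pos (by nlinarith [norm_nonneg r])
      (pow_pos (norm_pos_iff.mpr (sub_ne_zero.mpr hzr)) 2)
  rw [Complex.add_re, ← neg_sub z α, div_neg, Complex.neg_re]
  linarith

theorem Complex.norm_sub_le_norm_one_sub_conj_mul {z r : ℂ} (hz : 1 ≤ ‖z‖) (hr : 1 ≤ ‖r‖) :
    ‖z - r‖ ≤ ‖1 - conj z * r‖ := by
  have key : ‖1 - conj z * r‖ ^ 2 - ‖z - r‖ ^ 2 = (‖z‖ ^ 2 - 1) * (‖r‖ ^ 2 - 1) := by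
    simp only [Complex.sq_norm, Complex.normSq_apply, Complex.sub_re, Complex.sub_im,
      Complex.mul_re, Complex.mul_im, Complex.conj_re, Complex.conj_im, Complex.one_re,
      Complex.one_im]
    ring
  refine le_of_pow_le_pow_left₀ two_ne_zero (norm_nonneg _) ?_
  nlinarith [one_le_pow₀ (n := 2) hz, one_le_pow₀ (n := 2) hr]

theorem Complex.exists_norm_eq_one_norm_mul_add_eq (a b : ℂ) :
    ∃ c : ℂ, ‖c‖ = 1 ∧ ‖c * a + b‖ = ‖a‖ + ‖b‖ := by
  rcases eq_or_ne a 0 with rfl | ha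
  · exact ⟨1, norm_one, by simp⟩
  rcases eq_or_ne b 0 with rfl | hb
  · exact ⟨1, norm_one, by simp⟩
  refine ⟨b / a * (‖a‖ / ‖b‖ : ℝ), ?_, ?_⟩
  · rw [norm_mul, norm_div, Complex.norm_real, Real.norm_of_nonneg (by positivity)]
    field_simp
  · rw [mul_right_comm, div_mul_cancel₀ b ha, mul_comm b, ← add_one_mul, norm_mul,
      ← Complex.ofReal_one, ← Complex.ofReal_add, Complex.norm_real,
      Real.norm_of_nonneg (by positivity)]
    field_simp

section PolyMax

variable (p : ℂ[X]) {r : ℝ} {z : ℂ}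

theorem bddAbove_range_norm_eval_sphere (r : ℝ) :
    BddAbove (range fun z : sphere (0 : ℂ) r => ‖p.eval (z : ℂ)‖) := by
  rw [← image_univ, ← image_image (fun z : ℂ => ‖p.eval z‖), image_univ, Subtype.range_coe]
  exact (isCompact_sphere (0 : ℂ) r).bddAbove_image p.continuous.norm.continuousOn

theorem norm_eval_le_polyMax (hz : ‖z‖ = r) : ‖p.eval z‖ ≤ polyMax p r :=
  le_ciSup (bddAbove_range_norm_eval_sphere p r) ⟨z, mem_sphere_zero_iff_norm.mpr hz⟩

variable {p}

theorem polyMax_le {C : ℝ} (hr : 0 ≤ r) (hC : ∀ z : ℂ, ‖z‖ = r → ‖p.eval z‖ ≤ C) :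
    polyMax p r ≤ C := by
  have : Nonempty (sphere (0 : ℂ) r) := (NormedSpace.sphere_nonempty.mpr hr).to_subtype
  exact ciSup_le fun z => hC z (mem_sphere_zero_iff_norm.mp z.2)

end PolyMax

namespace Polynomial

variable {p : ℂ[X]} {n : ℕ}

theorem norm_eval_le_of_forall_norm_eq_one (f : ℂ[X]) {C : ℝ}
    (hC : ∀ z : ℂ, ‖z‖ = 1 → ‖f.eval z‖ ≤ C) {z : ℂ} (hz : ‖z‖ ≤ 1) : ‖f.eval z‖ ≤ C := by
  refine Complex.norm_le_of_forall_mem_frontier_norm_le (U := ball 0 1) isBounded_ball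
    f.differentiable.diffContOnCl (fun w hw => hC w ?_) ?_
  · rwa [frontier_ball (0 : ℂ) one_ne_zero, mem_sphere_zero_iff_norm] at hw
  · rwa [closure_ball (0 : ℂ) one_ne_zero, mem_closedBall_zero_iff]

theorem eval_reflect_of_ne_zero {N : ℕ} {f : ℂ[X]} (hf : f.natDegree ≤ N) {y : ℂ} (hy : y ≠ 0) :
    (reflect N f).eval y = y ^ N * f.eval y⁻¹ := by
  have : Invertible y⁻¹ := invertibleOfNonzero (inv_ne_zero hy)
  have h := eval₂_reflect_mul_pow (RingHom.id ℂ) y⁻¹ N f hf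
  rw [invOf_eq_inv, inv_inv, ← eval, ← eval] at h
  rw [← h, mul_left_comm, ← mul_pow, mul_inv_cancel₀ hy, one_pow, mul_one]

theorem norm_eval_reflect_le_polyMax (hp : p.natDegree ≤ n) {u : ℂ} (hu : ‖u‖ ≤ 1) :
    ‖(reflect n p).eval u‖ ≤ polyMax p 1 := by
  refine norm_eval_le_of_forall_norm_eq_one _ (fun w hw => ?_) hu
  have hw0 : w ≠ 0 := norm_ne_zero_iff.mp (by rw [hw]; exact one_ne_zero)
  rw [eval_reflect_of_ne_zero hp hw0, norm_mul, norm_pow, hw, one_pow, one_mul]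
  exact norm_eval_le_polyMax p (by rw [norm_inv, hw, inv_one])

theorem norm_coeff_le_polyMax (hp : p.natDegree ≤ n) : ‖p.coeff n‖ ≤ polyMax p 1 := by
  simpa [← coeff_zero_eq_eval_zero, coeff_reflect] using
    norm_eval_reflect_le_polyMax hp (u := 0) (by simp)

theorem norm_eval_le_pow_mul_polyMax (hp : p.natDegree ≤ n) {z : ℂ} (hz : 1 ≤ ‖z‖) :
    ‖p.eval z‖ ≤ ‖z‖ ^ n * polyMax p 1 := by
  have hz0 : 0 < ‖z‖ := one_pos.trans_le hz
  have h := norm_eval_reflect_le_polyMax hp (u := z⁻¹)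
    (by rw [norm_inv]; exact inv_le_one_of_one_le₀ hz)
  rw [eval_reflect_of_ne_zero hp (inv_ne_zero (norm_pos_iff.mp hz0)), inv_inv, norm_mul, norm_pow,
    norm_inv, inv_pow] at h
  rwa [inv_mul_le_iff₀ (pow_pos hz0 n)] at h

theorem coeff_X_mul_derivative {R : Type*} [CommRing R] (f : R[X]) (j : ℕ) :
    (X * derivative f).coeff j = j * f.coeff j := by
  cases j with
  | zero => simp
  | succ i => rw [coeff_X_mul, coeff_derivative, mul_comm]; push_cast; ring

theorem natDegree_X_mul_derivative_le {R : Type*} [CommRing R] (f : R[X]) :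
    (X * derivative f).natDegree ≤ f.natDegree :=
  natDegree_le_iff_coeff_eq_zero.mpr fun k hk => by
    rw [coeff_X_mul_derivative, coeff_eq_zero_of_natDegree_lt hk, mul_zero]

theorem X_mul_derivative_reflect {R : Type*} [CommRing R] {f : R[X]}
    (hf : f.natDegree ≤ n) :
    X * derivative (reflect n f) = reflect n (C (n : R) * f - X * derivative f) := by
  ext k
  rw [coeff_X_mul_derivative, coeff_reflect, coeff_reflect, coeff_sub, coeff_C_mul,
    coeff_X_mul_derivative, ← sub_mul]
  rcases le_or_gt k n with hk | hk
  · rw [revAt_le hk, Nat.cast_sub hk, sub_sub_cancel]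
  · rw [revAt_eq_self_of_lt hk, coeff_eq_zero_of_natDegree_lt (hf.trans_lt hk), mul_zero,
      mul_zero]

noncomputable def conjReflect (n : ℕ) (p : ℂ[X]) : ℂ[X] :=
  reflect n (p.map (starRingEnd ℂ))

theorem natDegree_conjReflect_le (hp : p.natDegree ≤ n) : (conjReflect n p).natDegree ≤ n :=
  natDegree_reflect_le.trans (max_le le_rfl (natDegree_map_le.trans hp))

theorem eval_conjReflect (hp : p.natDegree ≤ n) {w : ℂ} (hw : w ≠ 0) :
    (conjReflect n p).eval w = w ^ n * conj (p.eval (conj w)⁻¹) := by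
  rw [conjReflect, eval_reflect_of_ne_zero (natDegree_map_le.trans hp) hw, eval_map,
    ← Complex.conj_conj w⁻¹, eval₂_at_apply, map_inv₀]

theorem norm_eval_conjReflect (hp : p.natDegree ≤ n) {w : ℂ} (hw : w ≠ 0) :
    ‖(conjReflect n p).eval w‖ = ‖w‖ ^ n * ‖p.eval (conj w)⁻¹‖ := by
  rw [eval_conjReflect hp hw, norm_mul, norm_pow, Complex.norm_conj]

theorem norm_eval_conjReflect_of_norm_eq_one (hp : p.natDegree ≤ n) {w : ℂ} (hw : ‖w‖ = 1) :
    ‖(conjReflect n p).eval w‖ = ‖p.eval w‖ := by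
  have hw0 : w ≠ 0 := norm_ne_zero_iff.mp (by rw [hw]; exact one_ne_zero)
  rw [norm_eval_conjReflect hp hw0, hw, one_pow, one_mul,
    RCLike.inv_eq_conj (by rwa [RCLike.norm_conj]), RCLike.conj_conj]

theorem X_mul_derivative_conjReflect (hp : p.natDegree ≤ n) :
    X * derivative (conjReflect n p) = conjReflect n (C (n : ℂ) * p - X * derivative p) := by
  rw [conjReflect, X_mul_derivative_reflect (natDegree_map_le.trans hp), conjReflect,
    Polynomial.map_sub, Polynomial.map_mul, Polynomial.map_mul, map_C, map_X, derivative_map]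
  simp

theorem norm_eval_eq_norm_leadingCoeff_mul_prod_roots (p : ℂ[X]) (z : ℂ) :
    ‖p.eval z‖ = ‖p.leadingCoeff‖ * (p.roots.map fun r => ‖z - r‖).prod := by
  rw [(IsAlgClosed.splits p).eval_eq_prod_roots, norm_mul, ← normHom_apply (p.roots.map _).prod,
    map_multiset_prod, Multiset.map_map]
  rfl

theorem norm_eval_le_norm_eval_conjReflect (hp : p.natDegree ≤ n)
    (hnz : ∀ z : ℂ, ‖z‖ < 1 → p.eval z ≠ 0) {z : ℂ} (hz : 1 ≤ ‖z‖) :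
    ‖p.eval z‖ ≤ ‖(conjReflect n p).eval z‖ := by
  have hz0 : z ≠ 0 := norm_pos_iff.mp (one_pos.trans_le hz)
  have hroots : ∀ r ∈ p.roots, 1 ≤ ‖r‖ := fun r hr =>
    not_lt.mp fun h => hnz r h (isRoot_of_mem_roots hr)
  have hfactor : ∀ r ∈ p.roots, ‖z - r‖ ≤ ‖z‖ * ‖(conj z)⁻¹ - r‖ := fun r hr => by
    rw [← Complex.norm_conj z, ← norm_mul, mul_sub, mul_inv_cancel₀ (by simpa using hz0)]
    exact Complex.norm_sub_le_norm_one_sub_conj_mul hz (hroots r hr)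
  calc ‖p.eval z‖ = ‖p.leadingCoeff‖ * (p.roots.map fun r => ‖z - r‖).prod :=
        norm_eval_eq_norm_leadingCoeff_mul_prod_roots p z
    _ ≤ ‖p.leadingCoeff‖ * (p.roots.map fun r => ‖z‖ * ‖(conj z)⁻¹ - r‖).prod := by
        gcongr
        exact Multiset.prod_map_le_prod_map₀ _ _ (fun _ _ => norm_nonneg _) hfactor
    _ = ‖z‖ ^ p.natDegree * ‖p.eval (conj z)⁻¹‖ := by
        rw [Multiset.prod_map_mul, Multiset.map_const', Multiset.prod_replicate,
          ← (IsAlgClosed.splits p).natDegree_eq_card_roots,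
          norm_eval_eq_norm_leadingCoeff_mul_prod_roots]
        ring
    _ ≤ ‖z‖ ^ n * ‖p.eval (conj z)⁻¹‖ := by gcongr
    _ = ‖(conjReflect n p).eval z‖ := (norm_eval_conjReflect hp hz0).symm

theorem natDegree_mul_eval_add_sub_mul_eval_derivative_ne_zero {G : ℂ[X]}
    (hG : 0 < G.natDegree) (hroots : ∀ r ∈ G.roots, ‖r‖ < 1) {z α : ℂ} (hz : ‖z‖ = 1)
    (hα : ‖α‖ = 1) : (G.natDegree : ℂ) * G.eval z + (α - z) * G.derivative.eval z ≠ 0 := by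
  have hsplit := IsAlgClosed.splits G
  have hzr : ∀ r ∈ G.roots, z ≠ r := fun r hr h => (hroots r hr).ne (h ▸ hz)
  have hGz : G.eval z ≠ 0 := fun h =>
    hzr z ((mem_roots (ne_zero_of_natDegree_gt hG)).mpr h) rfl
  have hS : (G.natDegree : ℂ) * G.eval z + (α - z) * G.derivative.eval z =
      G.eval z * (G.roots.map fun r => 1 + (α - z) * (1 / (z - r))).sum := by
    rw [hsplit.eval_derivative_eq_eval_mul_sum hGz, Multiset.sum_map_add, Multiset.map_const',
      Multiset.sum_replicate, Multiset.sum_map_mul_left, ← hsplit.natDegree_eq_card_roots,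
      nsmul_eq_mul, mul_one]
    ring
  rw [hS]
  refine mul_ne_zero hGz ?_
  rcases eq_or_ne α z with rfl | hαz
  · simpa [← hsplit.natDegree_eq_card_roots] using hG.ne'
  -- Rotated by `z / (α - z)`, every summand has positive real part.
  have hterm : ∀ r ∈ G.roots, 0 < (z / (α - z) * (1 + (α - z) * (1 / (z - r)))).re := by
    intro r hr
    have hαz' : α - z ≠ 0 := sub_ne_zero.mpr hαz
    have hzr' : z - r ≠ 0 := sub_ne_zero.mpr (hzr r hr)
    convert Complex.re_div_sub_add_div_sub_pos hz hα hαz (hroots r hr) using 2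
    field_simp
  have hsum : 0 < (z / (α - z) * (G.roots.map fun r => 1 + (α - z) * (1 / (z - r))).sum).re := by
    have h := Multiset.sum_lt_sum_of_nonempty (f := fun _ => (0 : ℝ))
      (hsplit.roots_ne_zero hG.ne') hterm
    rw [Multiset.map_const', Multiset.sum_replicate, smul_zero] at h
    rw [← Multiset.sum_map_mul_left]
    refine h.trans_eq ?_
    rw [← Complex.coe_reAddGroupHom, map_multiset_sum, Multiset.map_map]
    rfl
  exact fun h => by rw [h, mul_zero, Complex.zero_re] at hsum; exact lt_irrefl _ hsum

theorem norm_lt_one_of_isRoot_sub_C_mul_X_pow (hp : p.natDegree ≤ n) {c : ℂ}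
    (hc : polyMax p 1 < ‖c‖) {r : ℂ} (hr : (p - C c * X ^ n).IsRoot r) : ‖r‖ < 1 := by
  by_contra! h
  have hpr : p.eval r = c * r ^ n := by simpa [sub_eq_zero] using hr
  have := norm_eval_le_pow_mul_polyMax hp h
  rw [hpr, norm_mul, norm_pow, mul_comm] at this
  exact this.not_gt (mul_lt_mul_of_pos_left hc (pow_pos (one_pos.trans_le h) n))

theorem norm_mul_eval_add_sub_mul_eval_derivative_le (hdeg : p.natDegree = n) (hn : 0 < n) {z α : ℂ}
    (hz : ‖z‖ = 1) (hα : ‖α‖ = 1) :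
    ‖(n : ℂ) * p.eval z + (α - z) * p.derivative.eval z‖ ≤ n * polyMax p 1 := by
  by_contra! hD
  have hnαz : (n : ℂ) * α * z ^ (n - 1) ≠ 0 := by
    have : (n : ℂ) ≠ 0 := Nat.cast_ne_zero.mpr hn.ne'
    have : α ≠ 0 := norm_ne_zero_iff.mp (by rw [hα]; exact one_ne_zero)
    have : z ≠ 0 := norm_ne_zero_iff.mp (by rw [hz]; exact one_ne_zero)
    positivity
  -- `c` is chosen so that the polar derivative of `p - c X^n` vanishes at `z`.
  obtain ⟨c, hcD⟩ : ∃ c : ℂ,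
      c * ((n : ℂ) * α * z ^ (n - 1)) = n * p.eval z + (α - z) * p.derivative.eval z :=
    ⟨_, div_mul_cancel₀ _ hnαz⟩
  have hc : polyMax p 1 < ‖c‖ := by
    rw [← hcD, norm_mul, norm_mul, norm_mul, norm_pow, hz, hα, one_pow, mul_one, mul_one,
      Complex.norm_natCast, mul_comm] at hD
    exact lt_of_mul_lt_mul_right hD (Nat.cast_nonneg n)
  have hGn : (p - C c * X ^ n).coeff n ≠ 0 := by
    rw [coeff_sub, coeff_C_mul_X_pow, if_pos rfl, sub_ne_zero]
    exact fun h => ((norm_coeff_le_polyMax hdeg.le).trans_lt hc).ne (congrArg norm h)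
  have hGdeg : (p - C c * X ^ n).natDegree = n := le_antisymm
    ((natDegree_sub_le_of_le hdeg.le (natDegree_C_mul_X_pow_le c n)).trans (max_self n).le)
    (le_natDegree_of_ne_zero hGn)
  have hpolar := natDegree_mul_eval_add_sub_mul_eval_derivative_ne_zero (hGdeg.symm ▸ hn)
    (fun r hr => norm_lt_one_of_isRoot_sub_C_mul_X_pow hdeg.le hc (isRoot_of_mem_roots hr)) hz hα
  refine hpolar ?_
  have hzn : z ^ n = z * z ^ (n - 1) := by rw [← pow_succ', Nat.sub_add_cancel hn]
  simp only [hGdeg, eval_sub, eval_mul, eval_C, eval_pow, eval_X, derivative_sub,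
    derivative_C_mul_X_pow]
  linear_combination (-(n : ℂ) * c) * hzn - hcD

theorem norm_eval_derivative_conjReflect_of_norm_eq_one (hp : p.natDegree ≤ n) {u : ℂ}
    (hu : ‖u‖ = 1) :
    ‖(derivative (conjReflect n p)).eval u‖ = ‖(n : ℂ) * p.eval u - u * p.derivative.eval u‖ := by
  have hg : (C (n : ℂ) * p - X * derivative p).natDegree ≤ n := by
    refine (natDegree_sub_le_of_le ((natDegree_C_mul_le _ _).trans hp)
      ((natDegree_X_mul_derivative_le p).trans hp)).trans (max_self n).le
  have h := congrArg (fun f => ‖f.eval u‖) (X_mul_derivative_conjReflect hp)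
  rw [norm_eval_conjReflect_of_norm_eq_one hg hu, eval_mul, eval_X, norm_mul, hu, one_mul] at h
  simpa using h

theorem norm_eval_derivative_add_norm_eval_derivative_conjReflect_le (hdeg : p.natDegree = n)
    (hn : 0 < n) {u : ℂ} (hu : ‖u‖ = 1) :
    ‖p.derivative.eval u‖ + ‖(conjReflect n p).derivative.eval u‖ ≤ n * polyMax p 1 := by
  obtain ⟨c, hc, hsum⟩ := Complex.exists_norm_eq_one_norm_mul_add_eq (u * p.derivative.eval u)
    (n * p.eval u - u * p.derivative.eval u)
  rw [norm_eval_derivative_conjReflect_of_norm_eq_one hdeg.le hu]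
  calc _ = ‖c * (u * p.derivative.eval u) + (n * p.eval u - u * p.derivative.eval u)‖ := by
        rw [hsum, norm_mul, hu, one_mul]
    _ = ‖(n : ℂ) * p.eval u + (c * u - u) * p.derivative.eval u‖ := by ring_nf
    _ ≤ n * polyMax p 1 := norm_mul_eval_add_sub_mul_eval_derivative_le hdeg hn hu
          (by rw [norm_mul, hc, hu, one_mul])

theorem hasDerivAt_eval_ofReal_mul (f : ℂ[X]) (u : ℂ) (t : ℝ) :
    HasDerivAt (fun s : ℝ => f.eval (s * u)) (f.derivative.eval (t * u) * u) t :=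
  ((f.hasDerivAt _).comp (t : ℂ) (hasDerivAt_mul_const u)).comp_ofReal

theorem norm_eval_ofReal_mul_le {f : ℂ[X]} {u : ℂ} (hu : ‖u‖ = 1) {n : ℕ} {a C : ℝ}
    (h1 : ‖f.eval u‖ ≤ a + C)
    (hderiv : ∀ w : ℂ, 1 ≤ ‖w‖ → ‖f.derivative.eval w‖ ≤ C * (n * ‖w‖ ^ (n - 1)))
    {R : ℝ} (hR : 1 ≤ R) : ‖f.eval (R * u)‖ ≤ a + C * R ^ n := by
  have hnorm : ∀ t : ℝ, 1 ≤ t → ‖(t : ℂ) * u‖ = t := fun t ht => by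
    rw [norm_mul, hu, mul_one, Complex.norm_real, Real.norm_of_nonneg (by linarith)]
  refine image_norm_le_of_norm_deriv_right_le_deriv_boundary (f := fun t : ℝ => f.eval (t * u))
    (B := fun t => a + C * t ^ n) (a := 1) (b := R)
    (f.continuous.comp (Complex.continuous_ofReal.mul continuous_const)).continuousOn
    (fun t _ => (hasDerivAt_eval_ofReal_mul f u t).hasDerivWithinAt)
    (by simpa using h1) (fun t => ((hasDerivAt_pow n t).const_mul C).const_add a)
    (fun t ht => ?_) ⟨hR, le_rfl⟩
  rw [norm_mul, hu, mul_one]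
  have h := hderiv (t * u) (by rw [hnorm t ht.1]; exact ht.1)
  rwa [hnorm t ht.1] at h

theorem norm_eval_add_norm_eval_conjReflect_le (hdeg : p.natDegree = n) (hn : 0 < n) {u : ℂ}
    (hu : ‖u‖ = 1) {R : ℝ} (hR : 1 ≤ R) :
    ‖p.eval (R * u)‖ + ‖(conjReflect n p).eval (R * u)‖ ≤ (R ^ n + 1) * polyMax p 1 := by
  set q := conjReflect n p
  obtain ⟨β, hβ, hT⟩ :=
    Complex.exists_norm_eq_one_norm_mul_add_eq (q.eval (R * u)) (p.eval (R * u))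
  have hTdeg : (C β * q + p).natDegree ≤ n := natDegree_add_le_of_degree_le
    ((natDegree_C_mul_le _ _).trans (natDegree_conjReflect_le hdeg.le)) hdeg.le
  have hT'circle : polyMax (C β * q + p).derivative 1 ≤ n * polyMax p 1 := by
    refine polyMax_le zero_le_one fun w hw => ?_
    rw [derivative_add, derivative_C_mul, eval_add, eval_mul, eval_C]
    calc _ ≤ ‖β * q.derivative.eval w‖ + ‖p.derivative.eval w‖ := norm_add_le _ _
      _ = ‖p.derivative.eval w‖ + ‖q.derivative.eval w‖ := by rw [norm_mul, hβ, one_mul, add_comm]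
      _ ≤ n * polyMax p 1 :=
        norm_eval_derivative_add_norm_eval_derivative_conjReflect_le hdeg hn hw
  have hTu : ‖(C β * q + p).eval u‖ ≤ polyMax p 1 + polyMax p 1 := by
    rw [eval_add, eval_mul, eval_C]
    refine (norm_add_le _ _).trans ?_
    rw [norm_mul, hβ, one_mul, norm_eval_conjReflect_of_norm_eq_one hdeg.le hu]
    exact add_le_add (norm_eval_le_polyMax p hu) (norm_eval_le_polyMax p hu)
  have hbound := norm_eval_ofReal_mul_le (n := n) hu hTu (fun w hw => ?_) hR
  · rw [eval_add, eval_mul, eval_C, hT] at hbound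
    linarith
  calc _ ≤ ‖w‖ ^ (n - 1) * polyMax (C β * q + p).derivative 1 := norm_eval_le_pow_mul_polyMax
        ((natDegree_derivative_le _).trans (Nat.sub_le_sub_right hTdeg 1)) hw
    _ ≤ ‖w‖ ^ (n - 1) * (n * polyMax p 1) := by gcongr
    _ = polyMax p 1 * (n * ‖w‖ ^ (n - 1)) := by ring

end Polynomial

theorem ankeny_rivlin (p : Polynomial ℂ) (n : ℕ) (hn : 1 ≤ n)
    (hdeg : p.natDegree = n)
    (hnz : ∀ z : ℂ, ‖z‖ < 1 → p.eval z ≠ 0)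
    (R : ℝ) (hR : 1 ≤ R) :
    polyMax p R ≤ ((R ^ n + 1) / 2) * polyMax p 1 := by
  refine polyMax_le (zero_le_one.trans hR) fun z hz => ?_
  have hR0 : (R : ℂ) ≠ 0 := Complex.ofReal_ne_zero.mpr (one_pos.trans_le hR).ne'
  have hu : ‖z / R‖ = 1 := by
    rw [norm_div, hz, Complex.norm_real, Real.norm_of_nonneg (zero_le_one.trans hR),
      div_self (one_pos.trans_le hR).ne']
  have hzu : z = R * (z / R) := (mul_div_cancel₀ z hR0).symm
  have hle := norm_eval_le_norm_eval_conjReflect hdeg.le hnz (hz ▸ hR)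
  have hsum := norm_eval_add_norm_eval_conjReflect_le hdeg hn hu hR
  rw [← hzu] at hsum
  linarith
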